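/- Let ħ, v_F > 0, V₀ ∈ ℝ, a < b, E ∈ ℝ with E ≠ 0 and E ≠ V₀, and let V(x) = V₀ for a < x < b, V(x) = 0 otherwise. Set k := |E|/(ħv_F), q := |E − V₀|/(ħv_F), s := sign(E), s′ := sign(E − V₀), α := (1 + s′/s)/2, β := (1 − s′/s)/2, and let t ∈ ℂ with |t| = 1. Define ψ : ℝ → ℂ² by ψ(x) = (e^{ikx}, s·e^{ikx}) for x < a; ψ(x) = (αe^{iqx} + βe^{−iqx}, s′(αe^{iqx} − βe^{−iqx})) for a < x < b; ψ(x) = (t·e^{ikx}, s·t·e^{ikx}) for x > b. Define n_s(x) := (1/2)·ψ(x)*σ_sψ(x) and J_s(x) := (ħ/2)·Im(ψ(x)*σ_sψ′(x)) for s = 0,1,2,3. Then for every x ∉ {a,b}: n₀(x) = 1, n₁(x) = s, n₂(x) = n₃(x) = 0, J₂(x) = J₃(x) = 0, v_F·J₀(x) = (E − V(x))·n₁(x), and v_F·J₁(x) = (E − V(x))·n₀(x). In particular the moments of this Klein-tunneling wave function form a piecewise-constant solution with v_F J₀ + n₁V = n₁E and v_F J₁ + n₀V = n₀E. -/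

import Mathlib

open Matrix

/-- The Pauli matrices `σ₀, σ₁, σ₂, σ₃` as 2×2 complex matrices. -/
noncomputable def pauli : Fin 4 → Matrix (Fin 2) (Fin 2) ℂ :=
  ![!![1, 0; 0, 1], !![0, 1; 1, 0], !![0, -Complex.I; Complex.I, 0], !![1, 0; 0, -1]]

/-- One-dimensional spinorial densities `n_s(x) := (1/2)·ψ(x)*σ_s ψ(x)`. -/
noncomputable def nOneD (ψ : ℝ → Fin 2 → ℂ) (s : Fin 4) (x : ℝ) : ℝ :=
  ((1 / 2 : ℂ) * (star (ψ x) ⬝ᵥ (pauli s).mulVec (ψ x))).re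

/-- One-dimensional spinorial currents `J_s(x) := (ħ/2)·Im(ψ(x)*σ_s ψ′(x))`. -/
noncomputable def JOneD (hbar : ℝ) (ψ : ℝ → Fin 2 → ℂ) (s : Fin 4) (x : ℝ) : ℝ :=
  (hbar / 2) * (star (ψ x) ⬝ᵥ (pauli s).mulVec (fun i => deriv (fun y => ψ y i) x)).im

/-! Away from the interfaces `a` and `b` the wave function is locally a plane wave
`y ↦ e^{iκy} c (1, s)` with `|c| = 1`, `s = sign E` and `ħ v_F κ = s (E − V)`: inside the barrier
`α, β ∈ {0, 1}` select the single branch `e^{±iqy}`, and its spinor is again `(1, s)`.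
For such a wave `n_j = ½ (1, s)* σ_j (1, s) = (1, s, 0, 0)_j`, and since `ψ' = iκψ` every current
is `J_j = ħκ n_j`; with `s² = 1`, `ħ v_F κ = s (E − V)` gives the two current identities. -/

open Filter Topology

lemma Real.abs_eq_sign_mul (r : ℝ) : |r| = Real.sign r * r := by
  rcases lt_trichotomy r 0 with hr | rfl | hr
  · rw [abs_of_neg hr, Real.sign_of_neg hr, neg_one_mul]
  · simp
  · rw [abs_of_pos hr, Real.sign_of_pos hr, one_mul]

noncomputable def planeWave (κ : ℝ) (u : Fin 2 → ℂ) (y : ℝ) : Fin 2 → ℂ :=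
  Complex.exp (Complex.I * κ * y) • u

lemma hasDerivAt_planeWave_apply (κ : ℝ) (u : Fin 2 → ℂ) (x : ℝ) (i : Fin 2) :
    HasDerivAt (fun y => planeWave κ u y i) (Complex.I * κ * planeWave κ u x i) x := by
  have hexp : HasDerivAt (fun y : ℝ => Complex.exp (Complex.I * κ * y))
      (Complex.exp (Complex.I * κ * x) * (Complex.I * κ)) x := by
    simpa using ((hasDerivAt_id (x : ℂ)).const_mul (Complex.I * κ)).cexp.comp_ofReal
  simpa [planeWave, mul_comm, mul_left_comm, mul_assoc] using hexp.mul_const (u i)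

lemma nOneD_of_apply_eq_smul {ψ : ℝ → Fin 2 → ℂ} {x d : ℝ} {w : ℂ} (hw : ‖w‖ = 1)
    (hd : d ^ 2 = 1) (h : ψ x = w • ![1, (d : ℂ)]) (j : Fin 4) :
    nOneD ψ j x = ![1, d, 0, 0] j := by
  have hw' : w * star w = 1 := by
    rw [Complex.star_def, Complex.mul_conj, Complex.normSq_eq_norm_sq, hw]; norm_num
  rw [nOneD, h, star_smul, mulVec_smul, dotProduct_smul, smul_dotProduct, smul_smul,
    smul_eq_mul, hw', one_mul]
  fin_cases j <;> simp [pauli, mulVec, dotProduct, Fin.sum_univ_two] <;> linarith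

lemma JOneD_eq_of_hasDerivAt {ψ : ℝ → Fin 2 → ℂ} {x κ : ℝ}
    (h : ∀ i, HasDerivAt (fun y => ψ y i) (Complex.I * κ * ψ x i) x) (hbar : ℝ) (j : Fin 4) :
    JOneD hbar ψ j x = hbar * κ * nOneD ψ j x := by
  have hderiv : (fun i => deriv (fun y => ψ y i) x) = (Complex.I * κ) • ψ x :=
    funext fun i => (h i).deriv
  rw [JOneD, nOneD, hderiv, mulVec_smul, dotProduct_smul, smul_eq_mul]
  simp [Complex.mul_im]
  ring

lemma moments_of_eventuallyEq_planeWave {ψ : ℝ → Fin 2 → ℂ} {x κ d : ℝ} {c : ℂ}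
    (hc : ‖c‖ = 1) (hd : d ^ 2 = 1) (h : ψ =ᶠ[𝓝 x] planeWave κ (c • ![1, (d : ℂ)]))
    (hbar : ℝ) (j : Fin 4) :
    nOneD ψ j x = ![1, d, 0, 0] j ∧ JOneD hbar ψ j x = hbar * κ * ![1, d, 0, 0] j := by
  have hn : nOneD ψ j x = ![1, d, 0, 0] j := by
    refine nOneD_of_apply_eq_smul (w := Complex.exp (Complex.I * κ * x) * c) ?_ hd ?_ j
    · rw [norm_mul, hc, mul_one, mul_assoc, ← Complex.ofReal_mul, Complex.norm_exp_I_mul_ofReal]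
    · rw [h.eq_of_nhds, planeWave, smul_smul]
  refine ⟨hn, ?_⟩
  rw [JOneD_eq_of_hasDerivAt (κ := κ) (fun i => ?_), hn]
  rw [h.eq_of_nhds]
  exact (hasDerivAt_planeWave_apply κ _ x i).congr_of_eventuallyEq
    (h.mono fun y hy => congrFun hy i)

noncomputable def barrier (a b V₀ x : ℝ) : ℝ := if a < x ∧ x < b then V₀ else 0

noncomputable def kleinWave (hbar vF V₀ a b E : ℝ) (t : ℂ) (x : ℝ) : Fin 2 → ℂ :=
  let k := |E| / (hbar * vF)
  let q := |E - V₀| / (hbar * vF)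
  let s := Real.sign E
  let s' := Real.sign (E - V₀)
  let α := (1 + s' / s) / 2
  let β := (1 - s' / s) / 2
  if x < a then
    ![Complex.exp (Complex.I * k * x), (s : ℂ) * Complex.exp (Complex.I * k * x)]
  else if x < b then
    ![(α : ℂ) * Complex.exp (Complex.I * q * x)
        + (β : ℂ) * Complex.exp (-(Complex.I * q * x)),
      (s' : ℂ) * ((α : ℂ) * Complex.exp (Complex.I * q * x)
        - (β : ℂ) * Complex.exp (-(Complex.I * q * x)))]
  else
    ![t * Complex.exp (Complex.I * k * x),
      (s : ℂ) * t * Complex.exp (Complex.I * k * x)]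

section kleinWave

variable {hbar vF V₀ a b E y : ℝ} {t : ℂ}

lemma kleinWave_of_lt (hya : y < a) :
    kleinWave hbar vF V₀ a b E t y =
      planeWave (Real.sign E * E / (hbar * vF)) ![1, (Real.sign E : ℂ)] y := by
  ext i
  fin_cases i <;> simp [kleinWave, planeWave, hya, Real.abs_eq_sign_mul E, mul_comm]

lemma kleinWave_of_max_lt (hy : max a b < y) :
    kleinWave hbar vF V₀ a b E t y =
      planeWave (Real.sign E * E / (hbar * vF)) (t • ![1, (Real.sign E : ℂ)]) y := by
  obtain ⟨hay, hby⟩ := max_lt_iff.mp hy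
  ext i
  fin_cases i <;> simp [kleinWave, planeWave, hay.not_gt, hby.not_gt, Real.abs_eq_sign_mul E]
  all_goals ring

lemma kleinWave_of_mem_Ioo (hE : E ≠ 0) (hEV : E ≠ V₀) (hy : y ∈ Set.Ioo a b) :
    kleinWave hbar vF V₀ a b E t y =
      planeWave (Real.sign E * (E - V₀) / (hbar * vF)) ![1, (Real.sign E : ℂ)] y := by
  simp only [kleinWave, hy.1.not_gt, hy.2, if_true, if_false, Real.abs_eq_sign_mul (E - V₀)]
  rcases Real.sign_apply_eq_of_ne_zero E hE with hs | hs <;>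
  rcases Real.sign_apply_eq_of_ne_zero (E - V₀) (sub_ne_zero.mpr hEV) with hs' | hs' <;>
  · rw [hs, hs']
    ext i
    fin_cases i <;> simp [planeWave] <;> congr 1 <;> ring

variable (hbar vF) in
lemma kleinWave_eventuallyEq_planeWave (hE : E ≠ 0) (hEV : E ≠ V₀) (ht : ‖t‖ = 1)
    {x : ℝ} (hxa : x ≠ a) (hxb : x ≠ b) :
    ∃ c : ℂ, ‖c‖ = 1 ∧ kleinWave hbar vF V₀ a b E t =ᶠ[𝓝 x]
      planeWave (Real.sign E * (E - barrier a b V₀ x) / (hbar * vF))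
        (c • ![1, (Real.sign E : ℂ)]) := by
  rcases hxa.lt_or_gt with hxa | hax
  · refine ⟨1, norm_one, ?_⟩
    filter_upwards [Iio_mem_nhds hxa] with y hy
    rw [barrier, if_neg (fun h => h.1.not_gt hxa), sub_zero, one_smul, kleinWave_of_lt hy]
  rcases hxb.lt_or_gt with hxb | hbx
  · refine ⟨1, norm_one, ?_⟩
    filter_upwards [Ioo_mem_nhds hax hxb] with y hy
    rw [barrier, if_pos ⟨hax, hxb⟩, one_smul, kleinWave_of_mem_Ioo hE hEV hy]
  · refine ⟨t, ht, ?_⟩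
    filter_upwards [Ioi_mem_nhds (max_lt hax hbx)] with y hy
    rw [barrier, if_neg (fun h => h.2.not_gt hbx), sub_zero, kleinWave_of_max_lt hy]

end kleinWave

theorem klein_wavefunction_moments_general
    (hbar vF V₀ a b E : ℝ) (hhbar : 0 < hbar) (hvF : 0 < vF)
    (hE : E ≠ 0) (hEV : E ≠ V₀)
    (V : ℝ → ℝ) (hV : ∀ x, V x = if a < x ∧ x < b then V₀ else 0)
    (k q s s' α β : ℝ)
    (hk : k = |E| / (hbar * vF)) (hq : q = |E - V₀| / (hbar * vF))
    (hs : s = Real.sign E) (hs' : s' = Real.sign (E - V₀))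
    (hα : α = (1 + s' / s) / 2) (hβ : β = (1 - s' / s) / 2)
    (t : ℂ) (ht : ‖t‖ = 1)
    (ψ : ℝ → Fin 2 → ℂ)
    (hψ : ∀ x : ℝ, ψ x =
      if x < a then
        ![Complex.exp (Complex.I * k * x), (s : ℂ) * Complex.exp (Complex.I * k * x)]
      else if x < b then
        ![(α : ℂ) * Complex.exp (Complex.I * q * x)
            + (β : ℂ) * Complex.exp (-(Complex.I * q * x)),
          (s' : ℂ) * ((α : ℂ) * Complex.exp (Complex.I * q * x)
            - (β : ℂ) * Complex.exp (-(Complex.I * q * x)))]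
      else
        ![t * Complex.exp (Complex.I * k * x),
          (s : ℂ) * t * Complex.exp (Complex.I * k * x)]) :
    ∀ x : ℝ, x ≠ a → x ≠ b →
      nOneD ψ 0 x = 1 ∧ nOneD ψ 1 x = s ∧ nOneD ψ 2 x = 0 ∧ nOneD ψ 3 x = 0 ∧
      JOneD hbar ψ 2 x = 0 ∧ JOneD hbar ψ 3 x = 0 ∧
      vF * JOneD hbar ψ 0 x = (E - V x) * nOneD ψ 1 x ∧
      vF * JOneD hbar ψ 1 x = (E - V x) * nOneD ψ 0 x ∧
      vF * JOneD hbar ψ 0 x + nOneD ψ 1 x * V x = nOneD ψ 1 x * E ∧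
      vF * JOneD hbar ψ 1 x + nOneD ψ 0 x * V x = nOneD ψ 0 x * E := by
  subst hk hq hs hs' hα hβ
  obtain rfl : ψ = kleinWave hbar vF V₀ a b E t := funext hψ
  obtain rfl : V = barrier a b V₀ := funext hV
  intro x hxa hxb
  obtain ⟨c, hc, hloc⟩ := kleinWave_eventuallyEq_planeWave hbar vF hE hEV ht hxa hxb
  have hs2 : Real.sign E ^ 2 = 1 := by
    rcases Real.sign_apply_eq_of_ne_zero E hE with h | h <;> norm_num [h]
  have hmoments := moments_of_eventuallyEq_planeWave hc hs2 hloc hbar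
  obtain ⟨hn0, hJ0⟩ := hmoments 0
  obtain ⟨hn1, hJ1⟩ := hmoments 1
  obtain ⟨hn2, hJ2⟩ := hmoments 2
  obtain ⟨hn3, hJ3⟩ := hmoments 3
  simp only [Matrix.cons_val] at hn0 hJ0 hn1 hJ1 hn2 hJ2 hn3 hJ3
  have hκ : vF * (hbar * (Real.sign E * (E - barrier a b V₀ x) / (hbar * vF))) =
      Real.sign E * (E - barrier a b V₀ x) := by
    field_simp
  rw [hn0, hn1, hn2, hn3, hJ0, hJ1, hJ2, hJ3]
  refine ⟨rfl, rfl, rfl, rfl, mul_zero _, mul_zero _, ?_, ?_, ?_, ?_⟩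
  · linear_combination hκ
  · linear_combination Real.sign E * hκ + (E - barrier a b V₀ x) * hs2
  · linear_combination hκ
  · linear_combination Real.sign E * hκ + (E - barrier a b V₀ x) * hs2

/-- **Moments of the Klein-tunneling wave function.**  For the wave function `ψ`
describing an electron of energy `E` (`E ≠ 0`, `E ≠ V₀`) hitting the barrier `V`
perpendicularly, with `k = |E|/(ħv_F)`, `q = |E−V₀|/(ħv_F)`, `s = sign E`,
`s′ = sign(E−V₀)`, `α = (1+s′/s)/2`, `β = (1−s′/s)/2` and `|t| = 1`, the moments
satisfy, for every `x ∉ {a,b}`: `n₀ = 1`, `n₁ = s`, `n₂ = n₃ = 0`, `J₂ = J₃ = 0`,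
`v_F·J₀ = (E−V)·n₁` and `v_F·J₁ = (E−V)·n₀`; in particular they form a
piecewise-constant solution with `v_F J₀ + n₁V = n₁E` and `v_F J₁ + n₀V = n₀E`. -/
theorem klein_wavefunction_moments
    (hbar vF V₀ a b E : ℝ) (hhbar : 0 < hbar) (hvF : 0 < vF) (hab : a < b)
    (hE : E ≠ 0) (hEV : E ≠ V₀)
    (V : ℝ → ℝ) (hV : ∀ x, V x = if a < x ∧ x < b then V₀ else 0)
    (k q s s' α β : ℝ)
    (hk : k = |E| / (hbar * vF)) (hq : q = |E - V₀| / (hbar * vF))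
    (hs : s = Real.sign E) (hs' : s' = Real.sign (E - V₀))
    (hα : α = (1 + s' / s) / 2) (hβ : β = (1 - s' / s) / 2)
    (t : ℂ) (ht : ‖t‖ = 1)
    (ψ : ℝ → Fin 2 → ℂ)
    (hψ : ∀ x : ℝ, ψ x =
      if x < a then
        ![Complex.exp (Complex.I * k * x), (s : ℂ) * Complex.exp (Complex.I * k * x)]
      else if x < b then
        ![(α : ℂ) * Complex.exp (Complex.I * q * x)
            + (β : ℂ) * Complex.exp (-(Complex.I * q * x)),
          (s' : ℂ) * ((α : ℂ) * Complex.exp (Complex.I * q * x)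
            - (β : ℂ) * Complex.exp (-(Complex.I * q * x)))]
      else
        ![t * Complex.exp (Complex.I * k * x),
          (s : ℂ) * t * Complex.exp (Complex.I * k * x)]) :
    ∀ x : ℝ, x ≠ a → x ≠ b →
      nOneD ψ 0 x = 1 ∧ nOneD ψ 1 x = s ∧ nOneD ψ 2 x = 0 ∧ nOneD ψ 3 x = 0 ∧
      JOneD hbar ψ 2 x = 0 ∧ JOneD hbar ψ 3 x = 0 ∧
      vF * JOneD hbar ψ 0 x = (E - V x) * nOneD ψ 1 x ∧
      vF * JOneD hbar ψ 1 x = (E - V x) * nOneD ψ 0 x ∧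
      vF * JOneD hbar ψ 0 x + nOneD ψ 1 x * V x = nOneD ψ 1 x * E ∧
      vF * JOneD hbar ψ 1 x + nOneD ψ 0 x * V x = nOneD ψ 0 x * E :=
  klein_wavefunction_moments_general hbar vF V₀ a b E hhbar hvF hE hEV V hV k q s s' α β hk hq hs
    hs' hα hβ t ht ψ hψ
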